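/- arXiv:2104.04491 — 2 statements merged into one kernel-verified Lean document; each statement's English description precedes it below -/
import Mathlib

section
/- For all n ≥ 1 and 1 ≤ i ≤ n, the number of permutations of [n] avoiding both 1234 and 1243 and starting with the letter i equals S_{n,i}. -/
/-- `π` contains the pattern `p` (given as the sequence of its values). -/
def ContainsPat {n k : ℕ} (π : Equiv.Perm (Fin n)) (p : Fin k → ℕ) : Prop :=
  ∃ f : Fin k → Fin n, StrictMono f ∧ ∀ a b : Fin k, p a < p b ↔ π (f a) < π (f b)

/-- The first letter of `π` (in one-line notation, with values in `[n] = {1,…,n}`) is `i`. -/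
def FirstIs {n : ℕ} (π : Equiv.Perm (Fin n)) (i : ℕ) : Prop :=
  ∀ j : Fin n, (j : ℕ) = 0 → (π j : ℕ) + 1 = i

/-! ### Basic predicates -/

def Bad {m : ℕ} (σ : Equiv.Perm (Fin m)) (b : Fin m) : Prop :=
  ∃ c d : Fin m, b < c ∧ c < d ∧ σ b < σ c ∧ σ b < σ d

def NoQuad {m : ℕ} (σ : Equiv.Perm (Fin m)) : Prop :=
  ∀ a b : Fin m, a < b → σ a < σ b → ¬ Bad σ b

def GoodGE {m : ℕ} (σ : Equiv.Perm (Fin m)) (k : ℕ) : Prop :=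
  ∀ b : Fin m, k ≤ (σ b : ℕ) + 1 → ¬ Bad σ b

def BadEq {m : ℕ} (σ : Equiv.Perm (Fin m)) (k : ℕ) : Prop :=
  ∀ b : Fin m, (σ b : ℕ) + 2 = k → Bad σ b

noncomputable def Ccard (m k : ℕ) : ℕ :=
  Nat.card {σ : Equiv.Perm (Fin m) // NoQuad σ ∧ GoodGE σ k}

noncomputable def Ecard (m k : ℕ) : ℕ :=
  Nat.card {σ : Equiv.Perm (Fin m) // (NoQuad σ ∧ GoodGE σ k) ∧ BadEq σ k}

/-! ### The pattern characterization -/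

lemma sm4 {α : Type*} [Preorder α] (g : Fin 4 → α)
    (h01 : g 0 < g 1) (h12 : g 1 < g 2) (h23 : g 2 < g 3) : StrictMono g := by
  intro x y hxy
  fin_cases x <;> fin_cases y <;>
    first
    | exact absurd hxy (by decide)
    | exact h01
    | exact h12
    | exact h23
    | exact h01.trans h12
    | exact h12.trans h23
    | exact (h01.trans h12).trans h23

lemma iff_comp {α β : Type*} [Preorder α] [Preorder β] (p : Fin 4 → α) (q : Fin 4 → β)
    (s : Equiv.Perm (Fin 4)) (hp : StrictMono (p ∘ s)) (hq : StrictMono (q ∘ s)) :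
    ∀ x y, p x < p y ↔ q x < q y := by
  intro x y
  have hx : p x = (p ∘ s) (s.symm x) := by simp
  have hy : p y = (p ∘ s) (s.symm y) := by simp
  have hx' : q x = (q ∘ s) (s.symm x) := by simp
  have hy' : q y = (q ∘ s) (s.symm y) := by simp
  rw [hx, hy, hx', hy', hp.lt_iff_lt, hq.lt_iff_lt]

lemma avoid_iff {n : ℕ} (π : Equiv.Perm (Fin n)) :
    (¬ ContainsPat π ![1,2,3,4] ∧ ¬ ContainsPat π ![1,2,4,3]) ↔ NoQuad π := by
  constructor
  · rintro ⟨h1, h2⟩ a b hab hvab ⟨c, d, hbc, hcd, hv1, hv2⟩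
    have hsm : StrictMono ![a, b, c, d] := sm4 _ hab hbc hcd
    rcases lt_or_ge (π c) (π d) with hvcd | hvcd
    · exact h1 ⟨![a, b, c, d], hsm,
        iff_comp _ _ 1 (by decide) (sm4 _ hvab hv1 hvcd)⟩
    · have hvdc : π d < π c := by
        rcases lt_or_eq_of_le hvcd with h | h
        · exact h
        · exact absurd (π.injective h.symm) (ne_of_lt hcd)
      refine h2 ⟨![a, b, c, d], hsm, iff_comp _ _ (Equiv.swap 2 3) (by decide) ?_⟩
      refine sm4 _ ?_ ?_ ?_
      · exact hvab
      · exact hv2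
      · exact hvdc
  · intro h
    constructor <;> rintro ⟨f, hf, hp⟩
    · have c01 : π (f 0) < π (f 1) := (hp 0 1).1 (by decide)
      have c12 : π (f 1) < π (f 2) := (hp 1 2).1 (by decide)
      have c13 : π (f 1) < π (f 3) := (hp 1 3).1 (by decide)
      exact h (f 0) (f 1) (hf (by decide)) c01
        ⟨f 2, f 3, hf (by decide), hf (by decide), c12, c13⟩
    · have c01 : π (f 0) < π (f 1) := (hp 0 1).1 (by decide)
      have c13 : π (f 1) < π (f 3) := (hp 1 3).1 (by decide)
      have c32 : π (f 3) < π (f 2) := (hp 3 2).1 (by decide)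
      exact h (f 0) (f 1) (hf (by decide)) c01
        ⟨f 2, f 3, hf (by decide), hf (by decide), c13.trans c32, c13⟩

/-! ### The decomposition equivalence -/

def Phi {m : ℕ} (x : Fin (m+1) × Equiv.Perm (Fin m)) : Equiv.Perm (Fin (m+1)) :=
  (finSuccEquiv m).trans ((x.2.optionCongr).trans (finSuccEquiv' x.1).symm)

lemma Phi_zero {m : ℕ} (v : Fin (m+1)) (τ : Equiv.Perm (Fin m)) : Phi (v, τ) 0 = v := by
  simp [Phi]

lemma Phi_succ {m : ℕ} (v : Fin (m+1)) (τ : Equiv.Perm (Fin m)) (i : Fin m) :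
    Phi (v, τ) i.succ = v.succAbove (τ i) := by
  simp [Phi, finSuccEquiv'_symm_some]

lemma Phi_bijective {m : ℕ} : Function.Bijective (Phi (m := m)) := by
  constructor
  · rintro ⟨v, τ⟩ ⟨v', τ'⟩ h
    have h0 : v = v' := by
      have := congrArg (fun σ : Equiv.Perm (Fin (m+1)) => σ 0) h
      simpa [Phi_zero] using this
    subst h0
    have hs : ∀ i : Fin m, τ i = τ' i := by
      intro i
      have := congrArg (fun σ : Equiv.Perm (Fin (m+1)) => σ i.succ) h
      simp only [Phi_succ] at this
      exact (Fin.strictMono_succAbove v).injective this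
    exact Prod.ext rfl (Equiv.ext hs)
  · intro σ
    set v := σ 0 with hv
    have hne : ∀ i : Fin m, σ i.succ ≠ v := by
      intro i h
      exact (Fin.succ_ne_zero i) (σ.injective (h.trans hv))
    have hex : ∀ i : Fin m, ∃ z : Fin m, v.succAbove z = σ i.succ := fun i =>
      Fin.exists_succAbove_eq (hne i)
    choose t ht using hex
    have tinj : Function.Injective t := by
      intro i j hij
      have : σ i.succ = σ j.succ := by rw [← ht i, ← ht j, hij]
      exact Fin.succ_injective _ (σ.injective this)
    let τ : Equiv.Perm (Fin m) := Equiv.ofBijective t (Finite.injective_iff_bijective.mp tinj)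
    refine ⟨(v, τ), ?_⟩
    apply Equiv.ext
    intro j
    induction j using Fin.cases with
    | zero => simp [Phi_zero, hv]
    | succ i => simp [Phi_succ, τ, Equiv.ofBijective_apply, ht]

/-! ### value lemmas for `succAbove` -/

lemma succAbove_coe {m : ℕ} (v : Fin (m+1)) (w : Fin m) :
    (v.succAbove w : ℕ) = if (w : ℕ) < (v : ℕ) then (w : ℕ) else (w : ℕ) + 1 := by
  rcases lt_or_ge (w.castSucc) v with h | h
  · rw [Fin.succAbove_of_castSucc_lt _ _ h]
    simp [Fin.lt_def] at h
    simp [h]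
  · rw [Fin.succAbove_of_le_castSucc _ _ h]
    simp [Fin.le_def] at h
    simp [Fin.val_succ, Nat.not_lt.mpr h]

lemma lt_succAbove_iff' {m : ℕ} (v : Fin (m+1)) (w : Fin m) :
    v < v.succAbove w ↔ (v : ℕ) ≤ (w : ℕ) := by
  rw [Fin.lt_def, succAbove_coe]
  split <;> omega

/-! ### transfer lemmas -/

lemma Bad_succ {m : ℕ} (v : Fin (m+1)) (τ : Equiv.Perm (Fin m)) (i : Fin m) :
    Bad (Phi (v, τ)) i.succ ↔ Bad τ i := by
  constructor
  · rintro ⟨c, d, hbc, hcd, h1, h2⟩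
    obtain ⟨c', rfl⟩ := Fin.exists_succ_eq_of_ne_zero (x := c) (by
      intro h; subst h; exact absurd hbc (by simp [Fin.lt_def]))
    obtain ⟨d', rfl⟩ := Fin.exists_succ_eq_of_ne_zero (x := d) (by
      intro h; subst h; exact absurd (hbc.trans hcd) (by simp [Fin.lt_def]))
    rw [Phi_succ, Phi_succ, Fin.succAbove_lt_succAbove_iff] at h1
    rw [Phi_succ, Phi_succ, Fin.succAbove_lt_succAbove_iff] at h2
    exact ⟨c', d', by simpa using hbc, by simpa using hcd, h1, h2⟩
  · rintro ⟨c, d, hbc, hcd, h1, h2⟩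
    refine ⟨c.succ, d.succ, by simpa using hbc, by simpa using hcd, ?_, ?_⟩ <;>
      rw [Phi_succ, Phi_succ, Fin.succAbove_lt_succAbove_iff] <;> assumption

lemma Bad_zero {m : ℕ} (v : Fin (m+1)) (τ : Equiv.Perm (Fin m)) :
    Bad (Phi (v, τ)) 0 ↔ (v : ℕ) + 3 ≤ m + 1 := by
  constructor
  · rintro ⟨c, d, hbc, hcd, h1, h2⟩
    obtain ⟨c', rfl⟩ := Fin.exists_succ_eq_of_ne_zero (x := c) (by
      intro h; subst h; exact absurd hbc (by simp [Fin.lt_def]))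
    obtain ⟨d', rfl⟩ := Fin.exists_succ_eq_of_ne_zero (x := d) (by
      intro h; subst h; exact absurd (hbc.trans hcd) (by simp [Fin.lt_def]))
    rw [Phi_zero, Phi_succ, lt_succAbove_iff'] at h1
    rw [Phi_zero, Phi_succ, lt_succAbove_iff'] at h2
    have hne : (τ c' : ℕ) ≠ (τ d' : ℕ) := by
      intro h
      have : c' = d' := τ.injective (Fin.val_injective h)
      subst this
      exact absurd hcd (lt_irrefl _)
    have hc := (τ c').isLt
    have hd := (τ d').isLt
    omega
  · intro h
    have h1 : (v : ℕ) < m := by omega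
    have h2 : (v : ℕ) + 1 < m := by omega
    set w1 : Fin m := ⟨v, h1⟩
    set w2 : Fin m := ⟨(v : ℕ) + 1, h2⟩
    set p := τ.symm w1
    set q := τ.symm w2
    have hpq : p ≠ q := by
      intro h
      have : w1 = w2 := by
        have := congrArg τ h
        simpa [p, q] using this
      simp [w1, w2, Fin.ext_iff] at this
    have hv1 : v < Phi (v, τ) p.succ := by
      rw [Phi_succ, lt_succAbove_iff']
      simp [p, w1]
    have hv2 : v < Phi (v, τ) q.succ := by
      rw [Phi_succ, lt_succAbove_iff']
      simp [q, w2]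
    rcases lt_or_gt_of_ne hpq with h' | h'
    · exact ⟨p.succ, q.succ, Fin.succ_pos _, by simpa using h', by rw [Phi_zero]; exact hv1,
        by rw [Phi_zero]; exact hv2⟩
    · exact ⟨q.succ, p.succ, Fin.succ_pos _, by simpa using h', by rw [Phi_zero]; exact hv2,
        by rw [Phi_zero]; exact hv1⟩

lemma NoQuad_Phi {m : ℕ} (v : Fin (m+1)) (τ : Equiv.Perm (Fin m)) :
    NoQuad (Phi (v, τ)) ↔ NoQuad τ ∧ GoodGE τ ((v : ℕ) + 1) := by
  constructor
  · intro h
    constructor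
    · intro a b hab hv hbad
      refine h a.succ b.succ (by simpa using hab) ?_ ((Bad_succ v τ b).2 hbad)
      rw [Phi_succ, Phi_succ, Fin.succAbove_lt_succAbove_iff]
      exact hv
    · intro b hb hbad
      refine h 0 b.succ (Fin.succ_pos _) ?_ ((Bad_succ v τ b).2 hbad)
      rw [Phi_zero, Phi_succ, lt_succAbove_iff']
      omega
  · rintro ⟨h1, h2⟩ a b hab hlt hbad
    induction b using Fin.cases with
    | zero => exact absurd hab (by simp [Fin.lt_def])
    | succ j =>
      rw [Bad_succ] at hbad
      induction a using Fin.cases with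
      | zero =>
        rw [Phi_zero, Phi_succ, lt_succAbove_iff'] at hlt
        exact h2 j (by omega) hbad
      | succ i =>
        rw [Phi_succ, Phi_succ, Fin.succAbove_lt_succAbove_iff] at hlt
        exact h1 i j (by simpa using hab) hlt hbad

lemma GoodGE_Phi {m k : ℕ} (v : Fin (m+1)) (τ : Equiv.Perm (Fin m)) :
    GoodGE (Phi (v, τ)) k ↔
      ((k ≤ (v : ℕ) + 1 → ¬ ((v : ℕ) + 3 ≤ m + 1)) ∧
        ∀ i, k ≤ (v.succAbove (τ i) : ℕ) + 1 → ¬ Bad τ i) := by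
  unfold GoodGE
  rw [Fin.forall_fin_succ]
  simp only [Phi_zero, Phi_succ, Bad_zero, Bad_succ]

lemma BadEq_Phi {m k : ℕ} (v : Fin (m+1)) (τ : Equiv.Perm (Fin m)) :
    BadEq (Phi (v, τ)) k ↔
      (((v : ℕ) + 2 = k → (v : ℕ) + 3 ≤ m + 1) ∧
        ∀ i, (v.succAbove (τ i) : ℕ) + 2 = k → Bad τ i) := by
  unfold BadEq
  rw [Fin.forall_fin_succ]
  simp only [Phi_zero, Phi_succ, Bad_zero, Bad_succ]

lemma mem2 {m : ℕ} (v : Fin (m+1)) (τ : Equiv.Perm (Fin m)) :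
    (NoQuad (Phi (v, τ)) ∧ GoodGE (Phi (v, τ)) 1) ↔
      (m ≤ (v : ℕ) + 1 ∧ (NoQuad τ ∧ GoodGE τ 1)) := by
  rw [NoQuad_Phi, GoodGE_Phi]
  constructor
  · rintro ⟨⟨nq, _⟩, g0, gt⟩
    refine ⟨by have := g0 (by omega); omega, nq, fun b _ => gt b (by omega)⟩
  · rintro ⟨hv, nq, g1⟩
    exact ⟨⟨nq, fun b _ => g1 b (by omega)⟩, fun _ => by omega,
      fun i _ => g1 i (by omega)⟩

lemma mem3 {m k : ℕ} (v : Fin (m+1)) (τ : Equiv.Perm (Fin m))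
    (hk2 : 2 ≤ k) (hkm : k ≤ m) :
    ((NoQuad (Phi (v, τ)) ∧ GoodGE (Phi (v, τ)) k) ∧ BadEq (Phi (v, τ)) k) ↔
      (((v : ℕ) = k - 2 ∧ (NoQuad τ ∧ GoodGE τ (k - 1)))
        ∨ (m - 1 ≤ (v : ℕ) ∧ ((NoQuad τ ∧ GoodGE τ k) ∧ BadEq τ k))) := by
  have hvlt : (v : ℕ) < m + 1 := v.isLt
  rw [NoQuad_Phi, GoodGE_Phi, BadEq_Phi]
  constructor
  · rintro ⟨⟨⟨nq, gv⟩, g0, gt⟩, b0, bt⟩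
    rcases Nat.lt_or_ge (v : ℕ) (k - 1) with hv | hv
    · rcases Nat.eq_or_lt_of_le (Nat.le_of_lt_succ (by omega) : (v : ℕ) ≤ k - 2) with hve | hvs
      · left
        refine ⟨hve, nq, ?_⟩
        intro b hb
        exact gv b (by omega)
      · exfalso
        have hk3 : k - 3 < m := by omega
        set i0 := τ.symm ⟨k - 3, hk3⟩ with hi0
        have hti : (τ i0 : ℕ) = k - 3 := by simp [hi0]
        have hbad : Bad τ i0 := by
          apply bt
          rw [succAbove_coe, if_neg (by omega)]
          omega
        exact gv i0 (by omega) hbad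
    · have hvm : m - 1 ≤ (v : ℕ) := by
        have := g0 (by omega)
        omega
      right
      refine ⟨hvm, ⟨nq, ?_⟩, ?_⟩
      · intro b hb
        apply gt b
        rw [succAbove_coe]
        split <;> omega
      · intro b hb
        apply bt b
        rw [succAbove_coe, if_pos (by omega)]
        omega
  · rintro (⟨hv, nq, g⟩ | ⟨hv, ⟨nq, g⟩, bq⟩)
    · refine ⟨⟨⟨nq, fun b hb => g b (by omega)⟩, fun h => by omega, ?_⟩,
        fun _ => by omega, ?_⟩
      · intro i hi
        apply g
        rw [succAbove_coe] at hi
        split at hi <;> omega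
      · intro i hi
        rw [succAbove_coe] at hi
        split at hi <;> omega
    · refine ⟨⟨⟨nq, fun b hb => g b (by omega)⟩, fun _ => by omega, ?_⟩,
        fun h => by omega, ?_⟩
      · intro i hi
        apply g
        have := (τ i).isLt
        rw [succAbove_coe] at hi
        split at hi <;> omega
      · intro i hi
        have := (τ i).isLt
        rw [succAbove_coe] at hi
        apply bq
        split at hi <;> omega

/-! ### counting infrastructure -/

lemma card_iff {α : Type*} {p q : α → Prop} (h : ∀ a, p a ↔ q a) :
    Nat.card {a // p a} = Nat.card {a // q a} :=
  Nat.card_congr (Equiv.subtypeEquivRight h)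

lemma card_false {α : Type*} {p : α → Prop} (h : ∀ a, ¬ p a) : Nat.card {a // p a} = 0 := by
  have : IsEmpty {a // p a} := ⟨fun x => h x.1 x.2⟩
  exact Nat.card_of_isEmpty

lemma card_decomp {N : ℕ} {β : Type*} [Finite β] (P : Fin N → β → Prop) :
    Nat.card {x : Fin N × β // P x.1 x.2} = ∑ v : Fin N, Nat.card {b : β // P v b} := by
  classical
  rw [Nat.card_congr (Equiv.subtypeProdEquivSigmaSubtype P)]
  haveI : ∀ v, Fintype {b : β // P v b} := fun v => Fintype.ofFinite _
  rw [Nat.card_eq_fintype_card, Fintype.card_sigma]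
  exact Finset.sum_congr rfl fun v _ => (Nat.card_eq_fintype_card).symm

lemma card_partition {α : Type*} [Finite α] (p q : α → Prop) :
    Nat.card {x // p x} = Nat.card {x // p x ∧ q x} + Nat.card {x // p x ∧ ¬ q x} := by
  classical
  rw [← Nat.card_sum]
  refine Nat.card_congr
    ⟨fun x => if h : q x.1 then Sum.inl ⟨x.1, x.2, h⟩ else Sum.inr ⟨x.1, x.2, h⟩,
     Sum.elim (fun z => ⟨z.1, z.2.1⟩) (fun z => ⟨z.1, z.2.1⟩), fun x => ?_, fun y => ?_⟩
  · by_cases h : q x.1 <;> simp [h]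
  · rcases y with z | z
    · simp [z.2.2]
    · simp [z.2.2]

lemma card_Phi {m : ℕ} (P : Equiv.Perm (Fin (m+1)) → Prop) :
    Nat.card {σ : Equiv.Perm (Fin (m+1)) // P σ} =
      ∑ v : Fin (m+1), Nat.card {τ : Equiv.Perm (Fin m) // P (Phi (v, τ))} := by
  have e : {x : Fin (m+1) × Equiv.Perm (Fin m) // P (Phi x)} ≃
      {σ : Equiv.Perm (Fin (m+1)) // P σ} :=
    Equiv.subtypeEquiv (Equiv.ofBijective Phi Phi_bijective) (fun x => Iff.rfl)
  rw [← Nat.card_congr e]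
  exact card_decomp (fun v τ => P (Phi (v, τ)))

lemma sum_one_point {N : ℕ} (f : Fin N → ℕ) (a : Fin N) (CA : ℕ)
    (h : ∀ v, f v = if v = a then CA else 0) : ∑ v : Fin N, f v = CA := by
  simp only [h]
  rw [Finset.sum_ite_eq' Finset.univ a fun _ => CA]
  simp

lemma sum_two_points {N : ℕ} (f : Fin N → ℕ) (a b : Fin N) (CA CB : ℕ)
    (h : ∀ v, f v = (if v = a then CA else 0) + (if v = b then CB else 0)) :
    ∑ v : Fin N, f v = CA + CB := by
  simp only [h]
  rw [Finset.sum_add_distrib, Finset.sum_ite_eq' Finset.univ a fun _ => CA,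
    Finset.sum_ite_eq' Finset.univ b fun _ => CB]
  simp

lemma sum_three_points {N : ℕ} (f : Fin N → ℕ) (a b c : Fin N)
    (CA CB CC : ℕ)
    (h : ∀ v, f v = (if v = a then CA else 0) + ((if v = b then CB else 0)
      + (if v = c then CC else 0))) :
    ∑ v : Fin N, f v = CA + (CB + CC) := by
  simp only [h]
  rw [Finset.sum_add_distrib, Finset.sum_add_distrib,
    Finset.sum_ite_eq' Finset.univ a fun _ => CA,
    Finset.sum_ite_eq' Finset.univ b fun _ => CB,
    Finset.sum_ite_eq' Finset.univ c fun _ => CC]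
  simp

/-! ### the counting recurrences -/

lemma Ccard_one_rec {m : ℕ} (hm : 1 ≤ m) : Ccard (m+1) 1 = 2 * Ccard m 1 := by
  unfold Ccard
  rw [card_Phi (fun σ => NoQuad σ ∧ GoodGE σ 1)]
  have hA : ((m - 1 : ℕ)) < m + 1 := by omega
  have hB : (m : ℕ) < m + 1 := by omega
  rw [sum_two_points _ ⟨m-1, hA⟩ ⟨m, hB⟩
    (Nat.card {τ : Equiv.Perm (Fin m) // NoQuad τ ∧ GoodGE τ 1})
    (Nat.card {τ : Equiv.Perm (Fin m) // NoQuad τ ∧ GoodGE τ 1}) ?_]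
  · omega
  · intro v
    rcases Nat.lt_or_ge (v : ℕ) (m - 1) with hv | hv
    · rw [card_false, if_neg (by simp [Fin.ext_iff]; omega), if_neg (by simp [Fin.ext_iff]; omega)]
      intro τ hτ
      have := (mem2 v τ).1 hτ
      omega
    · have : ((v : ℕ) = m - 1) ∨ ((v : ℕ) = m) := by have := v.isLt; omega
      rcases this with h | h
      · rw [if_pos (by simp [Fin.ext_iff, h]), if_neg (by simp [Fin.ext_iff]; omega)]
        rw [card_iff (fun τ => (mem2 v τ).trans (and_iff_right (by omega)))]
        simp
      · rw [if_neg (by simp [Fin.ext_iff]; omega), if_pos (by simp [Fin.ext_iff, h])]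
        rw [card_iff (fun τ => (mem2 v τ).trans (and_iff_right (by omega)))]
        simp

lemma Ecard_rec {m k : ℕ} (hk2 : 2 ≤ k) (hkm : k ≤ m) :
    Ecard (m+1) k = Ccard m (k-1) + (Ecard m k + Ecard m k) := by
  unfold Ecard Ccard
  rw [card_Phi (fun σ => (NoQuad σ ∧ GoodGE σ k) ∧ BadEq σ k)]
  have hA : (k - 2 : ℕ) < m + 1 := by omega
  have hB : ((m - 1 : ℕ)) < m + 1 := by omega
  have hC : (m : ℕ) < m + 1 := by omega
  rw [sum_three_points _ ⟨k-2, hA⟩ ⟨m-1, hB⟩ ⟨m, hC⟩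
    (Nat.card {τ : Equiv.Perm (Fin m) // NoQuad τ ∧ GoodGE τ (k-1)})
    (Nat.card {τ : Equiv.Perm (Fin m) // (NoQuad τ ∧ GoodGE τ k) ∧ BadEq τ k})
    (Nat.card {τ : Equiv.Perm (Fin m) // (NoQuad τ ∧ GoodGE τ k) ∧ BadEq τ k}) ?_]
  intro v
  rcases eq_or_ne ((v : ℕ)) (k - 2) with hv | hv
  · rw [if_pos (by simp [Fin.ext_iff, hv]), if_neg (by simp [Fin.ext_iff]; omega),
      if_neg (by simp [Fin.ext_iff]; omega)]
    have hiff : ∀ τ : Equiv.Perm (Fin m),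
        (((NoQuad (Phi (v, τ)) ∧ GoodGE (Phi (v, τ)) k) ∧ BadEq (Phi (v, τ)) k) ↔
          (NoQuad τ ∧ GoodGE τ (k-1))) := by
      intro τ
      refine (mem3 v τ hk2 hkm).trans ⟨?_, ?_⟩
      · rintro (⟨_, h⟩ | ⟨h, _⟩)
        · exact h
        · omega
      · intro h
        exact Or.inl ⟨hv, h⟩
    rw [card_iff hiff]
    omega
  · rcases Nat.lt_or_ge (v : ℕ) (m - 1) with hv2 | hv2
    · have hzero : Nat.card {τ : Equiv.Perm (Fin m) //
          ((NoQuad (Phi (v, τ)) ∧ GoodGE (Phi (v, τ)) k) ∧ BadEq (Phi (v, τ)) k)} = 0 := by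
        refine card_false fun τ hτ => ?_
        rcases (mem3 v τ hk2 hkm).1 hτ with ⟨h, _⟩ | ⟨h, _⟩ <;> omega
      rw [hzero, if_neg (by simp [Fin.ext_iff]; omega),
        if_neg (by simp [Fin.ext_iff]; omega), if_neg (by simp [Fin.ext_iff]; omega)]
    · have : ((v : ℕ) = m - 1) ∨ ((v : ℕ) = m) := by have := v.isLt; omega
      have hiff : ∀ τ : Equiv.Perm (Fin m),
          (((NoQuad (Phi (v, τ)) ∧ GoodGE (Phi (v, τ)) k) ∧ BadEq (Phi (v, τ)) k) ↔
            ((NoQuad τ ∧ GoodGE τ k) ∧ BadEq τ k)) := by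
        intro τ
        refine (mem3 v τ hk2 hkm).trans ?_
        constructor
        · rintro (⟨h, _⟩ | ⟨_, h⟩)
          · omega
          · exact h
        · intro h
          exact Or.inr ⟨hv2, h⟩
      rcases this with h | h
      · rw [if_neg (by simp [Fin.ext_iff]; omega), if_pos (by simp [Fin.ext_iff, h]),
          if_neg (by simp [Fin.ext_iff]; omega), card_iff hiff]
        omega
      · rw [if_neg (by simp [Fin.ext_iff]; omega), if_neg (by simp [Fin.ext_iff]; omega),
          if_pos (by simp [Fin.ext_iff, h]), card_iff hiff]
        omega

lemma GoodGE_mono {m : ℕ} {σ : Equiv.Perm (Fin m)} {k k' : ℕ} (h : k' ≤ k)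
    (hg : GoodGE σ k') : GoodGE σ k := fun b hb => hg b (by omega)

lemma Ccard_split {m k : ℕ} (hk2 : 2 ≤ k) (hkm : k ≤ m + 1) :
    Ccard m k = Ccard m (k-1) + Ecard m k := by
  unfold Ccard Ecard
  rw [card_partition (fun σ => NoQuad σ ∧ GoodGE σ k) (fun σ => GoodGE σ (k-1))]
  congr 1
  · refine card_iff fun σ => ?_
    constructor
    · rintro ⟨⟨nq, _⟩, hg⟩
      exact ⟨nq, hg⟩
    · rintro ⟨nq, hg⟩
      exact ⟨⟨nq, GoodGE_mono (by omega) hg⟩, hg⟩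
  · refine card_iff fun σ => ?_
    constructor
    · rintro ⟨⟨nq, hg⟩, hng⟩
      refine ⟨⟨nq, hg⟩, ?_⟩
      rw [GoodGE] at hng
      push_neg at hng
      obtain ⟨b, hb, hbad⟩ := hng
      have hval : (σ b : ℕ) + 2 = k := by
        by_contra hne
        exact (hg b (by omega)) hbad
      intro b' hb'
      have : σ b' = σ b := Fin.ext (by omega)
      rwa [σ.injective this]
    · rintro ⟨⟨nq, hg⟩, hbq⟩
      refine ⟨⟨nq, hg⟩, ?_⟩
      intro hgood
      have hkm2 : k - 2 < m := by omega
      set b := σ.symm ⟨k-2, hkm2⟩ with hbdef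
      have hval : (σ b : ℕ) = k - 2 := by simp [hbdef]
      exact hgood b (by omega) (hbq b (by omega))

lemma Bad_val_le {m : ℕ} {σ : Equiv.Perm (Fin m)} {b : Fin m} (h : Bad σ b) :
    (σ b : ℕ) + 3 ≤ m := by
  obtain ⟨c, d, _, hcd, h1, h2⟩ := h
  have hne : (σ c : ℕ) ≠ (σ d : ℕ) := by
    intro h
    exact absurd (σ.injective (Fin.ext h)) (ne_of_lt hcd)
  have hc := (σ c).isLt
  have hd := (σ d).isLt
  rw [Fin.lt_def] at h1 h2
  omega

lemma Ccard_top {m k k' : ℕ} (h : m ≤ k + 1) (h' : m ≤ k' + 1) :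
    Ccard m k = Ccard m k' := by
  unfold Ccard
  have key : ∀ (j : ℕ), m ≤ j + 1 → ∀ σ : Equiv.Perm (Fin m), GoodGE σ j := by
    intro j hj σ b hb hbad
    have := Bad_val_le hbad
    omega
  refine card_iff fun σ => ?_
  constructor
  · rintro ⟨nq, _⟩; exact ⟨nq, key k' h' σ⟩
  · rintro ⟨nq, _⟩; exact ⟨nq, key k h σ⟩

lemma perm_one_eq (σ : Equiv.Perm (Fin 1)) : σ = 1 := by
  apply Equiv.ext
  intro x
  exact Subsingleton.elim _ _

lemma Ccard_base (k : ℕ) : Ccard 1 k = 1 := by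
  unfold Ccard
  have hmem : ∀ σ : Equiv.Perm (Fin 1), NoQuad σ ∧ GoodGE σ k := by
    intro σ
    have hnb : ∀ b : Fin 1, ¬ Bad σ b := by
      intro b hb
      have := Bad_val_le hb
      omega
    exact ⟨fun a b _ _ => hnb b, fun b _ => hnb b⟩
  rw [card_iff (q := fun _ => True) (fun σ => iff_of_true (hmem σ) trivial)]
  rw [Nat.card_congr (Equiv.subtypeUnivEquiv (fun _ => trivial))]
  rw [Nat.card_eq_one_iff_unique]
  exact ⟨⟨fun a b => (perm_one_eq a).trans (perm_one_eq b).symm⟩, ⟨1⟩⟩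

lemma firstIs_iff {m : ℕ} (σ : Equiv.Perm (Fin (m+1))) (i : ℕ) :
    FirstIs σ i ↔ (σ 0 : ℕ) + 1 = i := by
  constructor
  · intro h
    exact h 0 rfl
  · intro h j hj
    have : j = 0 := Fin.ext hj
    rw [this]
    exact h

lemma cardA {m i : ℕ} (h1 : 1 ≤ i) (h2 : i ≤ m + 1) :
    Nat.card {σ : Equiv.Perm (Fin (m+1)) // NoQuad σ ∧ FirstIs σ i} = Ccard m i := by
  rw [card_Phi (fun σ => NoQuad σ ∧ FirstIs σ i)]
  refine sum_one_point _ ⟨i-1, by omega⟩ (Ccard m i) ?_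
  intro v
  by_cases hv : (v : ℕ) = i - 1
  · rw [if_pos (by simp [Fin.ext_iff, hv])]
    unfold Ccard
    refine card_iff fun τ => ?_
    rw [NoQuad_Phi, firstIs_iff, Phi_zero]
    have hvi : (v : ℕ) + 1 = i := by omega
    constructor
    · rintro ⟨⟨nq, g⟩, _⟩
      rw [hvi] at g
      exact ⟨nq, g⟩
    · rintro ⟨nq, g⟩
      exact ⟨⟨nq, by rw [hvi]; exact g⟩, hvi⟩
  · rw [if_neg (by simp [Fin.ext_iff]; omega)]
    refine card_false fun τ hτ => ?_
    have := (firstIs_iff _ i).1 hτ.2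
    rw [Phi_zero] at this
    omega

/-! ### the main induction -/

lemma mainC (S : ℕ → ℕ → ℤ)
    (h21 : S 2 1 = 1) (h22 : S 2 2 = 1)
    (h0 : ∀ n, S n 0 = 0)
    (hrec : ∀ n k, 1 ≤ k → k ≤ n - 2 →
      S n k = S n (k - 1) + 2 * S (n - 1) k - S (n - 1) (k - 1))
    (htop : ∀ n, 3 ≤ n → S n n = S n (n - 2) ∧ S n (n - 1) = S n (n - 2)) :
    ∀ m, 1 ≤ m → ∀ k, 1 ≤ k → k ≤ m + 1 → (Ccard m k : ℤ) = S (m+1) k := by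
  intro m hm
  induction m, hm using Nat.le_induction with
  | base =>
    intro k hk1 hk2
    interval_cases k
    · rw [Ccard_base]; norm_num [h21]
    · rw [Ccard_base]; norm_num [h22]
  | succ M hM IH =>
    intro k
    induction k using Nat.strong_induction_on with
    | _ k ihk =>
      intro hk1 hk2
      rcases eq_or_lt_of_le hk1 with hk1' | hk1'
      · -- k = 1
        subst hk1'
        rw [Ccard_one_rec hM]
        have hr := hrec (M+2) 1 (by omega) (by omega)
        have e0 : (M + 2 : ℕ) - 1 = M + 1 := by omega
        rw [e0] at hr
        rw [hr, h0, h0]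
        have := IH 1 (by omega) (by omega)
        push_cast
        rw [this]
        ring
      · -- 2 ≤ k
        have hk2' : 2 ≤ k := hk1'
        rcases Nat.lt_or_ge k (M + 1) with hkM | hkM
        · -- 2 ≤ k ≤ M
          have e1 : Ccard (M+1) k = Ccard (M+1) (k-1) + Ecard (M+1) k :=
            Ccard_split hk2' (by omega)
          have e2 : Ecard (M+1) k = Ccard M (k-1) + (Ecard M k + Ecard M k) :=
            Ecard_rec hk2' (by omega)
          have e3 : Ccard M k = Ccard M (k-1) + Ecard M k :=
            Ccard_split hk2' (by omega)
          have i1 : (Ccard (M+1) (k-1) : ℤ) = S (M+2) (k-1) :=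
            ihk (k-1) (by omega) (by omega) (by omega)
          have i2 : (Ccard M k : ℤ) = S (M+1) k := IH k (by omega) (by omega)
          have i3 : (Ccard M (k-1) : ℤ) = S (M+1) (k-1) := IH (k-1) (by omega) (by omega)
          have hr := hrec (M+2) k (by omega) (by omega)
          have e0 : (M + 2 : ℕ) - 1 = M + 1 := by omega
          rw [e0] at hr
          have e1' : (Ccard (M+1) k : ℤ) = (Ccard (M+1) (k-1) : ℤ) + (Ecard (M+1) k : ℤ) := by
            exact_mod_cast congrArg (Nat.cast : ℕ → ℤ) e1
          have e2' : (Ecard (M+1) k : ℤ) = (Ccard M (k-1) : ℤ) + ((Ecard M k : ℤ) + (Ecard M k : ℤ)) := by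
            exact_mod_cast congrArg (Nat.cast : ℕ → ℤ) e2
          have e3' : (Ccard M k : ℤ) = (Ccard M (k-1) : ℤ) + (Ecard M k : ℤ) := by
            exact_mod_cast congrArg (Nat.cast : ℕ → ℤ) e3
          rw [hr]
          omega
        · -- k = M+1 or M+2
          have hM1 : (Ccard (M+1) M : ℤ) = S (M+2) M :=
            ihk M (by omega) (by omega) (by omega)
          have htop' := htop (M+2) (by omega)
          have ea : (M + 2 : ℕ) - 2 = M := by omega
          have eb : (M + 2 : ℕ) - 1 = M + 1 := by omega
          rw [ea, eb] at htop'
          have hcc : Ccard (M+1) k = Ccard (M+1) M := Ccard_top (by omega) (by omega)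
          rw [hcc, hM1]
          rcases Nat.eq_or_lt_of_le hkM with h1 | h1
          · -- k = M+1
            have hks : k = M + 1 := h1.symm
            subst hks
            exact htop'.2.symm
          · -- k = M+2
            have hks : k = M + 2 := by omega
            subst hks
            exact htop'.1.symm

/-- The number of permutations of `[n]` avoiding the two patterns and starting with `i`
equals the Schröder triangle entry `S_{n,i}`. -/
theorem stmt_4 (S : ℕ → ℕ → ℤ)
    (h11 : S 1 1 = 1) (h21 : S 2 1 = 1) (h22 : S 2 2 = 1)
    (h0 : ∀ n, S n 0 = 0)
    (hrec : ∀ n k, 1 ≤ k → k ≤ n - 2 →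
      S n k = S n (k - 1) + 2 * S (n - 1) k - S (n - 1) (k - 1))
    (htop : ∀ n, 3 ≤ n → S n n = S n (n - 2) ∧ S n (n - 1) = S n (n - 2)) :
    ∀ n i, 1 ≤ n → 1 ≤ i → i ≤ n →
      (Nat.card {π : Equiv.Perm (Fin n) //
        ¬ ContainsPat π ![1, 2, 3, 4] ∧ ¬ ContainsPat π ![1, 2, 4, 3] ∧ FirstIs π i} : ℤ) = S n i := by
  intro n i hn hi1 hin
  have hmem : ∀ π : Equiv.Perm (Fin n),
      (¬ ContainsPat π ![1, 2, 3, 4] ∧ ¬ ContainsPat π ![1, 2, 4, 3] ∧ FirstIs π i) ↔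
        (NoQuad π ∧ FirstIs π i) := by
    intro π
    constructor
    · rintro ⟨a, b, c⟩
      exact ⟨(avoid_iff π).1 ⟨a, b⟩, c⟩
    · rintro ⟨a, c⟩
      obtain ⟨x, y⟩ := (avoid_iff π).2 a
      exact ⟨x, y, c⟩
  rw [card_iff hmem]
  obtain ⟨m, rfl⟩ : ∃ m, n = m + 1 := ⟨n - 1, by omega⟩
  rcases Nat.eq_zero_or_pos m with rfl | hm
  · -- n = 1
    have hi : i = 1 := by omega
    subst hi
    have hone : ∀ σ : Equiv.Perm (Fin 1), (NoQuad σ ∧ FirstIs σ 1) := by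
      intro σ
      constructor
      · intro a b hab
        have : (a : ℕ) < (b : ℕ) := hab
        have := a.isLt
        have := b.isLt
        omega
      · intro j hj
        have := (σ j).isLt
        omega
    rw [card_iff (q := fun _ => True) (fun σ => iff_of_true (hone σ) trivial)]
    rw [Nat.card_congr (Equiv.subtypeUnivEquiv (fun _ => trivial))]
    rw [show Nat.card (Equiv.Perm (Fin 1)) = 1 from
      Nat.card_eq_one_iff_unique.mpr ⟨⟨fun a b => (perm_one_eq a).trans (perm_one_eq b).symm⟩, ⟨1⟩⟩]
    rw [h11]
    norm_num
  · rw [cardA hi1 hin]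
    exact mainC S h21 h22 h0 hrec htop m hm i hi1 hin
end

section
/- There is a bijection between the set of permutations of [n] avoiding {1342, 1432} and the set of permutations of [n] avoiding {1234, 1243} that preserves both the values and the positions of the left-to-right minima. -/
/-- Position `j` is a left-to-right minimum of `π`. -/
def IsLRMin {n : ℕ} (π : Equiv.Perm (Fin n)) (j : Fin n) : Prop :=
  ∀ i : Fin n, i < j → π j < π i

open Finset

lemma Equiv.subtypeCongr_apply_of_pos {α : Type*} {p q : α → Prop} [DecidablePred p]
    [DecidablePred q] (e : {x // p x} ≃ {x // q x}) (f : {x // ¬ p x} ≃ {x // ¬ q x}) {a : α}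
    (h : p a) :
    e.subtypeCongr f a = e ⟨a, h⟩ := by
  simp [Equiv.subtypeCongr, Equiv.sumCompl_symm_apply_of_pos h]

lemma Equiv.subtypeCongr_apply_of_neg {α : Type*} {p q : α → Prop} [DecidablePred p]
    [DecidablePred q] (e : {x // p x} ≃ {x // q x}) (f : {x // ¬ p x} ≃ {x // ¬ q x}) {a : α}
    (h : ¬ p a) :
    e.subtypeCongr f a = f ⟨a, h⟩ := by
  simp [Equiv.subtypeCongr, Equiv.sumCompl_symm_apply_of_neg h]

lemma exists_equiv_of_card_fiber_eq {α β γ : Type*} [Finite α] [Finite β] {f : α → γ}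
    {g : β → γ} (h : ∀ c, Nat.card {a // f a = c} = Nat.card {b // g b = c}) :
    ∃ e : α ≃ β, ∀ a, g (e a) = f a :=
  ⟨Equiv.ofFiberEquiv fun c => Classical.choice (Finite.card_eq.1 (h c)),
    Equiv.ofFiberEquiv_map _⟩

lemma Fin.card_filter_not_le_iff {k : ℕ} {Q : Fin k → Prop} [DecidablePred Q] (hQ : Monotone Q)
    (x : Fin k) : #{y | ¬ Q y} ≤ x ↔ Q x := by
  refine ⟨fun h => by_contra fun hx => ?_, fun hx => ?_⟩
  · have := card_le_card (t := {y | ¬ Q y}) fun y hy =>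
      mem_filter.2 ⟨mem_univ y, fun hQy => hx (hQ (mem_Iic.1 hy) hQy)⟩
    rw [Fin.card_Iic] at this
    omega
  · refine (card_le_card fun y hy => mem_Iio.2 (lt_of_not_ge fun hxy => ?_)).trans_eq
      (Fin.card_Iio x)
    exact (mem_filter.1 hy).2 (hQ hxy hx)

lemma Fin.le_val_succAbove_iff {m b : ℕ} {c : Fin (m + 1)} {x : Fin m} (h : b ≤ c) :
    b ≤ (c.succAbove x : ℕ) ↔ b ≤ x := by
  rcases Fin.castSucc_lt_or_lt_succ c x with hx | hx
  · simp [Fin.succAbove_of_castSucc_lt _ _ hx]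
  · rw [Fin.succAbove_of_lt_succ _ _ hx, Fin.val_succ]
    rw [Fin.lt_def, Fin.val_succ] at hx
    omega

lemma Fin.succAbove_lt_self_iff {m : ℕ} {c : Fin (m + 1)} {x : Fin m} :
    c.succAbove x < c ↔ (x : ℕ) < c := by
  rw [Fin.succAbove_lt_iff_castSucc_lt, Fin.lt_def, Fin.val_castSucc]

lemma Fin.self_lt_succAbove_iff {m : ℕ} {c : Fin (m + 1)} {x : Fin m} :
    c < c.succAbove x ↔ (c : ℕ) ≤ x := by
  rw [Fin.lt_succAbove_iff_le_castSucc, Fin.le_def, Fin.val_castSucc]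

lemma Equiv.Perm.forall_eq_of_window_iff {m : ℕ} (τ : Equiv.Perm (Fin m)) {lo hi : ℕ}
    (hhi : hi ≤ m) :
    (∀ j k, lo ≤ τ j → (τ j : ℕ) < hi → lo ≤ τ k → (τ k : ℕ) < hi → j = k) ↔ hi ≤ lo + 1 := by
  refine ⟨fun h => by_contra fun hlo => ?_, fun h j k hj hj' hk hk' => τ.injective (by omega)⟩
  have heq := h (τ.symm ⟨lo, by omega⟩) (τ.symm ⟨lo + 1, by omega⟩)
  simp only [Equiv.apply_symm_apply, EmbeddingLike.apply_eq_iff_eq, Fin.mk.injEq] at heq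
  omega

section Patterns

variable {n k : ℕ} {π : Equiv.Perm (Fin n)}

lemma containsPat_iff_of_injective {p : Fin k → ℕ} (hp : Function.Injective p) :
    ContainsPat π p ↔
      ∃ f : Fin k → Fin n, StrictMono f ∧ ∀ a b, p a < p b → π (f a) < π (f b) := by
  refine exists_congr fun f => and_congr_right fun _ => ⟨fun h a b => (h a b).1, fun h a b => ?_⟩
  refine ⟨h a b, fun hlt => (lt_or_gt_of_ne fun hab => ?_).resolve_right fun hba => ?_⟩
  · exact hlt.ne (by rw [hp hab])
  · exact (h b a hba).asymm hlt

lemma strictMono_vecCons_four {i j k l : Fin n} (hij : i < j) (hjk : j < k) (hkl : k < l) :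
    StrictMono ![i, j, k, l] := by
  refine Fin.strictMono_iff_lt_succ.2 fun a => ?_
  fin_cases a <;> assumption

lemma contains_1342_or_1432_iff :
    (ContainsPat π ![1, 3, 4, 2] ∨ ContainsPat π ![1, 4, 3, 2]) ↔
      ∃ i j k l, i < j ∧ j < k ∧ k < l ∧ π i < π l ∧ π l < π j ∧ π l < π k := by
  simp only [containsPat_iff_of_injective (by decide : Function.Injective ![1, 3, 4, 2]),
    containsPat_iff_of_injective (by decide : Function.Injective ![1, 4, 3, 2])]
  constructor
  · rintro (⟨f, hf, h⟩ | ⟨f, hf, h⟩) <;>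
      exact ⟨f 0, f 1, f 2, f 3, hf (by decide), hf (by decide), hf (by decide),
        h 0 3 (by decide), h 3 1 (by decide), h 3 2 (by decide)⟩
  · rintro ⟨i, j, k, l, hij, hjk, hkl, hil, hlj, hlk⟩
    refine (lt_or_gt_of_ne (π.injective.ne hjk.ne)).imp (fun h => ?_) (fun h => ?_) <;>
      refine ⟨_, strictMono_vecCons_four hij hjk hkl, fun a b hab => ?_⟩ <;>
      fin_cases a <;> fin_cases b <;> simp at hab ⊢ <;> order

lemma contains_1234_or_1243_iff :
    (ContainsPat π ![1, 2, 3, 4] ∨ ContainsPat π ![1, 2, 4, 3]) ↔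
      ∃ i j k l, i < j ∧ j < k ∧ k < l ∧ π i < π j ∧ π j < π k ∧ π j < π l := by
  simp only [containsPat_iff_of_injective (by decide : Function.Injective ![1, 2, 3, 4]),
    containsPat_iff_of_injective (by decide : Function.Injective ![1, 2, 4, 3])]
  constructor
  · rintro (⟨f, hf, h⟩ | ⟨f, hf, h⟩) <;>
      exact ⟨f 0, f 1, f 2, f 3, hf (by decide), hf (by decide), hf (by decide),
        h 0 1 (by decide), h 1 2 (by decide), h 1 3 (by decide)⟩
  · rintro ⟨i, j, k, l, hij, hjk, hkl, hij', hjk', hjl'⟩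
    refine (lt_or_gt_of_ne (π.injective.ne hkl.ne)).imp (fun h => ?_) (fun h => ?_) <;>
      refine ⟨_, strictMono_vecCons_four hij hjk hkl, fun a b hab => ?_⟩ <;>
      fin_cases a <;> fin_cases b <;> simp at hab ⊢ <;> order

end Patterns

section Codes

variable {m : ℕ}

def LowerBounded (a : Fin m → ℕ) (σ : Equiv.Perm (Fin m)) : Prop :=
  ∀ i, a i ≤ σ i

def AtMostOneInWindow (a : Fin m → ℕ) (σ : Equiv.Perm (Fin m)) : Prop :=
  ∀ i j k, i < j → i < k → a i ≤ σ j → σ j < σ i → a i ≤ σ k → σ k < σ i → j = k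

def AtMostOneLargerAfter (σ : Equiv.Perm (Fin m)) : Prop :=
  ∀ i j k, i < j → i < k → σ i < σ j → σ i < σ k → j = k

def consPerm (c : Fin (m + 1)) (τ : Equiv.Perm (Fin m)) : Equiv.Perm (Fin (m + 1)) :=
  (finSuccEquiv m).trans ((Equiv.optionCongr τ).trans (finSuccEquiv' c).symm)

variable {c : Fin (m + 1)} {τ : Equiv.Perm (Fin m)}

@[simp] lemma consPerm_zero : consPerm c τ 0 = c := by
  simp [consPerm]

@[simp] lemma consPerm_succ (i : Fin m) : consPerm c τ i.succ = c.succAbove (τ i) := by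
  simp [consPerm]

lemma consPerm_bijective :
    Function.Bijective fun p : Fin (m + 1) × Equiv.Perm (Fin m) => consPerm p.1 p.2 := by
  refine (Nat.bijective_iff_injective_and_card _).2 ⟨fun ⟨c, τ⟩ ⟨c', τ'⟩ h => ?_, ?_⟩
  · have hc : c = c' := by simpa using congrArg (· 0) h
    subst hc
    refine Prod.ext rfl (Equiv.ext fun i => ?_)
    simpa using congrArg (· i.succ) h
  · simp [Fintype.card_perm, Nat.factorial_succ]

lemma card_perm_eq_mul_of_consPerm_iff {P : Equiv.Perm (Fin (m + 1)) → Prop}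
    {Q : Fin (m + 1) → Prop} {R : Equiv.Perm (Fin m) → Prop}
    (h : ∀ c τ, P (consPerm c τ) ↔ Q c ∧ R τ) :
    Nat.card {σ // P σ} = Nat.card {c // Q c} * Nat.card {τ // R τ} := by
  rw [← Nat.card_prod, ← Nat.card_congr (Equiv.subtypeProdEquivProd (p := Q) (q := R))]
  exact Nat.card_congr <| ((Equiv.ofBijective _ consPerm_bijective).subtypeEquiv
    fun p => (h p.1 p.2).symm).symm

lemma lowerBounded_consPerm_iff {a : Fin (m + 1) → ℕ} (ha : ∀ i, a i ≤ c) :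
    LowerBounded a (consPerm c τ) ↔ LowerBounded (a ∘ Fin.succ) τ := by
  simp [LowerBounded, Fin.forall_fin_succ, ha, Fin.le_val_succAbove_iff]

lemma atMostOneInWindow_consPerm_iff {a : Fin (m + 1) → ℕ} (ha : ∀ i, a i ≤ c) :
    AtMostOneInWindow a (consPerm c τ) ↔ c ≤ a 0 + 1 ∧ AtMostOneInWindow (a ∘ Fin.succ) τ := by
  simp [AtMostOneInWindow, Fin.forall_fin_succ, ha, Fin.le_val_succAbove_iff,
    Fin.succAbove_lt_self_iff, τ.forall_eq_of_window_iff c.is_le]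

lemma atMostOneLargerAfter_consPerm_iff :
    AtMostOneLargerAfter (consPerm c τ) ↔ m ≤ c + 1 ∧ AtMostOneLargerAfter τ := by
  have hwindow := τ.forall_eq_of_window_iff (lo := c) le_rfl
  simp only [Fin.is_lt, forall_const] at hwindow
  simp [AtMostOneLargerAfter, Fin.forall_fin_succ, Fin.self_lt_succAbove_iff, hwindow]

lemma lowerBounded_and_atMostOneInWindow_consPerm_iff {a : Fin (m + 1) → ℕ} (ha : Antitone a) :
    LowerBounded a (consPerm c τ) ∧ AtMostOneInWindow a (consPerm c τ) ↔
      (a 0 ≤ c ∧ c ≤ a 0 + 1) ∧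
        LowerBounded (a ∘ Fin.succ) τ ∧ AtMostOneInWindow (a ∘ Fin.succ) τ := by
  by_cases h0 : a 0 ≤ c
  · have hc : ∀ i, a i ≤ c := fun i => (ha i.zero_le).trans h0
    rw [lowerBounded_consPerm_iff hc, atMostOneInWindow_consPerm_iff hc]
    tauto
  · exact iff_of_false (fun h => h0 (by simpa using h.1 0)) fun h => h0 h.1.1

lemma lowerBounded_and_atMostOneLargerAfter_consPerm_iff {a : Fin (m + 1) → ℕ} (ha : Antitone a) :
    LowerBounded a (consPerm c τ) ∧ AtMostOneLargerAfter (consPerm c τ) ↔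
      (a 0 ≤ c ∧ m ≤ c + 1) ∧ LowerBounded (a ∘ Fin.succ) τ ∧ AtMostOneLargerAfter τ := by
  by_cases h0 : a 0 ≤ c
  · have hc : ∀ i, a i ≤ c := fun i => (ha i.zero_le).trans h0
    rw [lowerBounded_consPerm_iff hc, atMostOneLargerAfter_consPerm_iff]
    tauto
  · exact iff_of_false (fun h => h0 (by simpa using h.1 0)) fun h => h0 h.1.1

lemma card_near_bottom_eq_card_near_top (m b : ℕ) :
    Nat.card {c : Fin (m + 1) // b ≤ c ∧ (c : ℕ) ≤ b + 1} =
      Nat.card {c : Fin (m + 1) // b ≤ c ∧ m ≤ c + 1} := by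
  refine Nat.card_congr ⟨fun c => ⟨⟨m + b - c, ?_⟩, ?_⟩, fun c => ⟨⟨m + b - c, ?_⟩, ?_⟩,
    fun c => ?_, fun c => ?_⟩
  all_goals
    obtain ⟨⟨c, hc⟩, h⟩ := c
    simp only [Subtype.ext_iff, Fin.ext_iff] at h ⊢
    omega

theorem card_atMostOneInWindow_eq_card_atMostOneLargerAfter :
    ∀ {m : ℕ} (a : Fin m → ℕ), Antitone a →
      Nat.card {σ // LowerBounded a σ ∧ AtMostOneInWindow a σ} =
        Nat.card {σ // LowerBounded a σ ∧ AtMostOneLargerAfter σ}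
  | 0, _, _ => Nat.card_congr <| Equiv.subtypeEquivRight fun _ => by
      simp [LowerBounded, AtMostOneInWindow, AtMostOneLargerAfter]
  | m + 1, a, ha => by
    rw [card_perm_eq_mul_of_consPerm_iff fun _ _ =>
        lowerBounded_and_atMostOneInWindow_consPerm_iff ha,
      card_perm_eq_mul_of_consPerm_iff fun _ _ =>
        lowerBounded_and_atMostOneLargerAfter_consPerm_iff ha,
      card_near_bottom_eq_card_near_top, card_atMostOneInWindow_eq_card_atMostOneLargerAfter _
        (ha.comp_monotone Fin.strictMono_succ.monotone)]

end Codes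

section LRMin

variable {n : ℕ} {π π₀ : Equiv.Perm (Fin n)}

lemma exists_isLRMin_lt_of_not_isLRMin {p : Fin n} (hp : ¬ IsLRMin π p) :
    ∃ j < p, IsLRMin π j ∧ π j < π p := by
  classical
  obtain ⟨i, hip, hi⟩ : ∃ i < p, π i ≤ π p := by simpa [IsLRMin] using hp
  obtain ⟨j, hj, hmin⟩ := (univ.filter (· < p)).exists_min_image π ⟨i, by simpa using hip⟩
  rw [mem_filter] at hj
  refine ⟨j, hj.2, fun i' hi' => ?_, ?_⟩
  · exact (hmin i' (by simpa using hi'.trans hj.2)).lt_of_ne (π.injective.ne hi'.ne')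
  · exact ((hmin i (by simpa using hip)).trans hi).lt_of_ne (π.injective.ne hj.2.ne)

open Classical in
noncomputable def lrMinData (π : Equiv.Perm (Fin n)) : Fin n → Option (Fin n) :=
  fun j => if IsLRMin π j then some (π j) else none

lemma lrMinData_eq_iff :
    lrMinData π = lrMinData π₀ ↔
      ∀ j, (IsLRMin π j ↔ IsLRMin π₀ j) ∧ (IsLRMin π j → π j = π₀ j) := by
  simp only [funext_iff, lrMinData]
  refine forall_congr' fun j => ?_
  by_cases h : IsLRMin π j <;> by_cases h₀ : IsLRMin π₀ j <;> simp [h, h₀]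

def Admissible (π₀ : Equiv.Perm (Fin n)) (p v : Fin n) : Prop :=
  ∃ j < p, IsLRMin π₀ j ∧ π₀ j < v

lemma Admissible.mono {p q v w : Fin n} (h : Admissible π₀ p v) (hpq : p ≤ q) (hvw : v ≤ w) :
    Admissible π₀ q w :=
  let ⟨j, hjp, hj, hjv⟩ := h
  ⟨j, hjp.trans_le hpq, hj, hjv.trans_le hvw⟩

lemma lrMinData_eq_iff_admissible :
    lrMinData π = lrMinData π₀ ↔
      (∀ j, IsLRMin π₀ j → π j = π₀ j) ∧ ∀ p, ¬ IsLRMin π₀ p → Admissible π₀ p (π p) := by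
  rw [lrMinData_eq_iff]
  constructor
  · intro h
    refine ⟨fun j hj => (h j).2 ((h j).1.2 hj), fun p hp => ?_⟩
    obtain ⟨j, hjp, hj, hjv⟩ := exists_isLRMin_lt_of_not_isLRMin (mt (h p).1.1 hp)
    exact ⟨j, hjp, (h j).1.1 hj, (h j).2 hj ▸ hjv⟩
  · rintro ⟨hagree, hadm⟩
    have hmin : ∀ j, IsLRMin π₀ j → IsLRMin π j := by
      intro j hj i hij
      rw [hagree j hj]
      by_cases hi : IsLRMin π₀ i
      · exact hagree i hi ▸ hj i hij
      · obtain ⟨w, hwi, hw, hwv⟩ := hadm i hi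
        exact (hj w (hwi.trans hij)).trans hwv
    have hiff : ∀ j, IsLRMin π j ↔ IsLRMin π₀ j := by
      refine fun j => ⟨fun hj => by_contra fun hj₀ => ?_, hmin j⟩
      obtain ⟨w, hwj, hw, hwv⟩ := hadm j hj₀
      exact (hj w hwj).not_gt (hagree w hw ▸ hwv)
    exact fun j => ⟨hiff j, fun hj => hagree j ((hiff j).1 hj)⟩

end LRMin

section Fiber

variable {n : ℕ} (π₀ : Equiv.Perm (Fin n))

open Classical in
noncomputable def nonMinPos : Finset (Fin n) := univ.filter fun p => ¬ IsLRMin π₀ p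

noncomputable def nonMinVal : Finset (Fin n) := (nonMinPos π₀).map π₀.toEmbedding

variable {π₀}

lemma mem_nonMinPos {p : Fin n} : p ∈ nonMinPos π₀ ↔ ¬ IsLRMin π₀ p := by
  simp [nonMinPos]

lemma mem_nonMinVal {v : Fin n} : v ∈ nonMinVal π₀ ↔ ¬ IsLRMin π₀ (π₀.symm v) := by
  rw [nonMinVal, mem_map_equiv, mem_nonMinPos]

variable (π₀)

noncomputable def posIso : Fin #(nonMinPos π₀) ≃o nonMinPos π₀ :=
  (nonMinPos π₀).orderIsoOfFin rfl

noncomputable def valIso : Fin #(nonMinPos π₀) ≃o nonMinVal π₀ :=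
  (nonMinVal π₀).orderIsoOfFin (card_map _)

open Classical in
noncomputable def threshold (i : Fin #(nonMinPos π₀)) : ℕ :=
  #{x | ¬ Admissible π₀ (posIso π₀ x) (valIso π₀ i)}

variable {π₀}

lemma threshold_le_iff (i x : Fin #(nonMinPos π₀)) :
    threshold π₀ i ≤ x ↔ Admissible π₀ (posIso π₀ x) (valIso π₀ i) := by
  classical
  exact Fin.card_filter_not_le_iff (fun x y hxy h => h.mono ((posIso π₀).monotone hxy) le_rfl) x

lemma threshold_antitone : Antitone (threshold π₀) := by
  classical
  refine fun i j hij => card_le_card (monotone_filter_right _ fun x _ hj hi => hj ?_)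
  exact hi.mono le_rfl ((valIso π₀).monotone hij)

lemma mem_nonMinPos_iff_apply_mem {π : Equiv.Perm (Fin n)} (h : ∀ j, IsLRMin π₀ j → π j = π₀ j)
    (p : Fin n) : p ∈ nonMinPos π₀ ↔ π p ∈ nonMinVal π₀ := by
  rw [mem_nonMinPos, mem_nonMinVal, not_iff_not]
  refine ⟨fun hp => by rwa [h p hp, Equiv.symm_apply_apply], fun hp => ?_⟩
  have hq : π₀.symm (π p) = p := π.injective ((h _ hp).trans (π₀.apply_symm_apply _))
  rwa [hq] at hp

variable (π₀)

noncomputable def restrictNonMin :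
    {π : Equiv.Perm (Fin n) // ∀ j, IsLRMin π₀ j → π j = π₀ j} ≃
      (nonMinVal π₀ ≃ nonMinPos π₀) where
  toFun π := (π.1.subtypeEquiv (mem_nonMinPos_iff_apply_mem π.2)).symm
  invFun e := ⟨e.symm.subtypeCongr (π₀.subtypeEquiv fun p =>
      not_congr (mem_nonMinPos_iff_apply_mem (fun _ _ => rfl) p)),
    fun j hj => Equiv.subtypeCongr_apply_of_neg _ _ (mem_nonMinPos.not.2 (not_not.2 hj))⟩
  left_inv π := by
    ext p
    by_cases hp : p ∈ nonMinPos π₀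
    · simp [Equiv.subtypeCongr_apply_of_pos _ _ hp]
    · simp [Equiv.subtypeCongr_apply_of_neg _ _ hp, π.2 p (not_not.1 (mem_nonMinPos.not.1 hp))]
  right_inv e := by
    refine Equiv.ext fun v => ?_
    dsimp only
    rw [Equiv.symm_apply_eq]
    ext
    simp [Equiv.subtypeCongr_apply_of_pos _ _ (e v).2]

noncomputable def nonMinCode :
    {π : Equiv.Perm (Fin n) // ∀ j, IsLRMin π₀ j → π j = π₀ j} ≃
      Equiv.Perm (Fin #(nonMinPos π₀)) :=
  (restrictNonMin π₀).trans ((valIso π₀).toEquiv.equivCongr (posIso π₀).toEquiv).symm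

variable {π₀}

lemma apply_posIso_nonMinCode (π : {π : Equiv.Perm (Fin n) // ∀ j, IsLRMin π₀ j → π j = π₀ j})
    (i : Fin #(nonMinPos π₀)) : π.1 (posIso π₀ (nonMinCode π₀ π i)) = valIso π₀ i := by
  simp [nonMinCode, restrictNonMin]

lemma admissible_iff_lowerBounded
    (π : {π : Equiv.Perm (Fin n) // ∀ j, IsLRMin π₀ j → π j = π₀ j}) :
    (∀ p, ¬ IsLRMin π₀ p → Admissible π₀ p (π.1 p)) ↔
      LowerBounded (threshold π₀) (nonMinCode π₀ π) := by
  simp only [LowerBounded, threshold_le_iff, ← apply_posIso_nonMinCode π]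
  rw [(nonMinCode π₀ π).forall_congr_right
    (q := fun x => Admissible π₀ (posIso π₀ x) (π.1 (posIso π₀ x)))]
  refine ⟨fun h x => h _ (mem_nonMinPos.1 (posIso π₀ x).2), fun h p hp => ?_⟩
  simpa using h ((posIso π₀).symm ⟨p, mem_nonMinPos.2 hp⟩)

variable (π₀)

noncomputable def fiberEquiv :
    {π : Equiv.Perm (Fin n) // lrMinData π = lrMinData π₀} ≃
      {σ : Equiv.Perm (Fin #(nonMinPos π₀)) // LowerBounded (threshold π₀) σ} :=
  (Equiv.subtypeEquivRight fun _ => lrMinData_eq_iff_admissible).trans <|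
    (Equiv.subtypeSubtypeEquivSubtypeInter _ _).symm.trans <|
      (nonMinCode π₀).subtypeEquiv admissible_iff_lowerBounded

variable {π₀}

lemma apply_posIso_fiberEquiv (π : {π : Equiv.Perm (Fin n) // lrMinData π = lrMinData π₀})
    (i : Fin #(nonMinPos π₀)) : π.1 (posIso π₀ ((fiberEquiv π₀ π).1 i)) = valIso π₀ i :=
  apply_posIso_nonMinCode ⟨π.1, (lrMinData_eq_iff_admissible.1 π.2).1⟩ i

end Fiber

section Transfer

variable {n : ℕ} {π₀ π : Equiv.Perm (Fin n)} {σ : Equiv.Perm (Fin #(nonMinPos π₀))}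

lemma exists_posIso_apply_eq (σ : Equiv.Perm (Fin #(nonMinPos π₀))) {q : Fin n}
    (hq : ¬ IsLRMin π₀ q) : ∃ i, (posIso π₀ (σ i) : Fin n) = q :=
  ⟨σ.symm ((posIso π₀).symm ⟨q, mem_nonMinPos.2 hq⟩), by simp⟩

lemma not_isLRMin_of_lt (hπ : lrMinData π = lrMinData π₀) {i j : Fin n} (hij : i < j)
    (h : π i < π j) : ¬ IsLRMin π₀ j :=
  fun hj => ((lrMinData_eq_iff.1 hπ j).1.2 hj i hij).asymm h

lemma admissible_of_lt (hπ : lrMinData π = lrMinData π₀) {i q v : Fin n} (hiq : i < q)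
    (hv : π i < v) : Admissible π₀ q v := by
  obtain ⟨hiff, hagree⟩ := forall_and.1 (lrMinData_eq_iff.1 hπ)
  by_cases hi : IsLRMin π i
  · exact ⟨i, hiq, (hiff i).1 hi, hagree i hi ▸ hv⟩
  · obtain ⟨j, hji, hj, hjv⟩ := exists_isLRMin_lt_of_not_isLRMin hi
    exact ⟨j, hji.trans hiq, (hiff j).1 hj, hagree j hj ▸ hjv.trans hv⟩

lemma avoids_1342_1432_iff (hπ : lrMinData π = lrMinData π₀)
    (hσ : ∀ i, π (posIso π₀ (σ i)) = valIso π₀ i) :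
    (¬ ContainsPat π ![1, 3, 4, 2] ∧ ¬ ContainsPat π ![1, 4, 3, 2]) ↔
      AtMostOneInWindow (threshold π₀) σ := by
  rw [← not_or, contains_1342_or_1432_iff]
  constructor
  · intro hno i j k hij hik hj hji hk hki
    by_contra hjk
    wlog hlt : σ j < σ k generalizing j k
    · exact this k j hik hij hk hki hj hji (Ne.symm hjk)
        ((not_lt.1 hlt).lt_of_ne (σ.injective.ne (Ne.symm hjk)))
    obtain ⟨w, hwj, hw, hwv⟩ := (threshold_le_iff i (σ j)).1 hj
    refine hno ⟨w, posIso π₀ (σ j), posIso π₀ (σ k), posIso π₀ (σ i), hwj, by simpa using hlt,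
      by simpa using hki, ?_, ?_, ?_⟩
    · rwa [hσ, (lrMinData_eq_iff_admissible.1 hπ).1 w hw]
    · simpa [hσ] using hij
    · simpa [hσ] using hik
  · rintro hA ⟨i, j, k, l, hij, hjk, hkl, hil, hlj, hlk⟩
    obtain ⟨j', rfl⟩ := exists_posIso_apply_eq σ (not_isLRMin_of_lt hπ hij (hil.trans hlj))
    obtain ⟨k', rfl⟩ :=
      exists_posIso_apply_eq σ (not_isLRMin_of_lt hπ (hij.trans hjk) (hil.trans hlk))
    obtain ⟨l', rfl⟩ :=
      exists_posIso_apply_eq σ (not_isLRMin_of_lt hπ ((hij.trans hjk).trans hkl) hil)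
    simp only [hσ] at hil hlj hlk
    have hj := (threshold_le_iff l' (σ j')).2 (admissible_of_lt hπ hij hil)
    have hk := (threshold_le_iff l' (σ k')).2 (admissible_of_lt hπ (hij.trans hjk) hil)
    refine hjk.ne (congrArg (fun x => (posIso π₀ (σ x) : Fin n)) ?_)
    exact hA l' j' k' (by simpa using hlj) (by simpa using hlk) hj (by simpa using hjk.trans hkl)
      hk (by simpa using hkl)

lemma avoids_1234_1243_iff (hπ : lrMinData π = lrMinData π₀)
    (hσ : ∀ i, π (posIso π₀ (σ i)) = valIso π₀ i) :
    (¬ ContainsPat π ![1, 2, 3, 4] ∧ ¬ ContainsPat π ![1, 2, 4, 3]) ↔ AtMostOneLargerAfter σ := by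
  rw [← not_or, contains_1234_or_1243_iff]
  constructor
  · intro hno i j k hij hik hj hk
    by_contra hjk
    wlog hlt : σ j < σ k generalizing j k
    · exact this k j hik hij hk hj (Ne.symm hjk)
        ((not_lt.1 hlt).lt_of_ne (σ.injective.ne (Ne.symm hjk)))
    have hi : ¬ IsLRMin π (posIso π₀ (σ i)) := fun h =>
      mem_nonMinPos.1 (posIso π₀ (σ i)).2 ((lrMinData_eq_iff.1 hπ _).1.1 h)
    obtain ⟨w, hwi, -, hwv⟩ := exists_isLRMin_lt_of_not_isLRMin hi
    exact hno ⟨w, posIso π₀ (σ i), posIso π₀ (σ j), posIso π₀ (σ k), hwi, by simpa using hj,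
      by simpa using hlt, hwv, by simpa [hσ] using hij, by simpa [hσ] using hik⟩
  · rintro hB ⟨i, j, k, l, hij, hjk, hkl, hij', hjk', hjl'⟩
    obtain ⟨j', rfl⟩ := exists_posIso_apply_eq σ (not_isLRMin_of_lt hπ hij hij')
    obtain ⟨k', rfl⟩ :=
      exists_posIso_apply_eq σ (not_isLRMin_of_lt hπ (hij.trans hjk) (hij'.trans hjk'))
    obtain ⟨l', rfl⟩ := exists_posIso_apply_eq σ
      (not_isLRMin_of_lt hπ ((hij.trans hjk).trans hkl) (hij'.trans hjl'))
    simp only [hσ] at hjk' hjl'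
    refine hkl.ne (congrArg (fun x => (posIso π₀ (σ x) : Fin n)) ?_)
    exact hB j' k' l' (by simpa using hjk') (by simpa using hjl') (by simpa using hjk)
      (by simpa using hjk.trans hkl)

end Transfer

lemma card_fiber_eq_card_lowerBounded {n : ℕ} {π₀ : Equiv.Perm (Fin n)}
    {P : Equiv.Perm (Fin n) → Prop} {Q : Equiv.Perm (Fin #(nonMinPos π₀)) → Prop}
    (h : ∀ π : {π // lrMinData π = lrMinData π₀}, P π.1 ↔ Q (fiberEquiv π₀ π).1) :
    Nat.card {π : {π // P π} // lrMinData π.1 = lrMinData π₀} =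
      Nat.card {σ // LowerBounded (threshold π₀) σ ∧ Q σ} :=
  Nat.card_congr <| (Equiv.subtypeSubtypeEquivSubtypeInter P _).trans <|
    (Equiv.subtypeEquivRight fun _ => and_comm).trans <|
      (Equiv.subtypeSubtypeEquivSubtypeInter _ P).symm.trans <|
        ((fiberEquiv π₀).subtypeEquiv h).trans (Equiv.subtypeSubtypeEquivSubtypeInter _ Q)

lemma card_fiber_eq {n : ℕ} (d : Fin n → Option (Fin n)) :
    Nat.card {π : {π : Equiv.Perm (Fin n) //
        ¬ ContainsPat π ![1, 3, 4, 2] ∧ ¬ ContainsPat π ![1, 4, 3, 2]} // lrMinData π.1 = d} =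
      Nat.card {π : {π : Equiv.Perm (Fin n) //
        ¬ ContainsPat π ![1, 2, 3, 4] ∧ ¬ ContainsPat π ![1, 2, 4, 3]} // lrMinData π.1 = d} := by
  obtain ⟨π₀, rfl⟩ | hd := em (∃ π₀, lrMinData π₀ = d)
  · rw [card_fiber_eq_card_lowerBounded fun π =>
        avoids_1342_1432_iff π.2 (apply_posIso_fiberEquiv π),
      card_fiber_eq_card_lowerBounded fun π =>
        avoids_1234_1243_iff π.2 (apply_posIso_fiberEquiv π)]
    exact card_atMostOneInWindow_eq_card_atMostOneLargerAfter _ threshold_antitone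
  · have (P : Equiv.Perm (Fin n) → Prop) : IsEmpty {π : {π // P π} // lrMinData π.1 = d} :=
      ⟨fun π => hd ⟨_, π.2⟩⟩
    simp only [Nat.card_of_isEmpty]

/-- There is a bijection between `S_n(1342,1432)` and `S_n(1234,1243)` preserving
both the positions and the values of the left-to-right minima. -/
theorem stmt_8 (n : ℕ) :
    ∃ F : {π : Equiv.Perm (Fin n) //
            ¬ ContainsPat π ![1, 3, 4, 2] ∧ ¬ ContainsPat π ![1, 4, 3, 2]} ≃
          {π : Equiv.Perm (Fin n) //
            ¬ ContainsPat π ![1, 2, 3, 4] ∧ ¬ ContainsPat π ![1, 2, 4, 3]},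
      ∀ π j, (IsLRMin π.1 j ↔ IsLRMin (F π).1 j) ∧
             (IsLRMin π.1 j → π.1 j = (F π).1 j) := by
  obtain ⟨F, hF⟩ := exists_equiv_of_card_fiber_eq card_fiber_eq
  exact ⟨F, fun π => lrMinData_eq_iff.1 (hF π).symm⟩
end
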